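/- arXiv:1808.01245 — 2 statements merged into one kernel-verified Lean document; each statement's English description precedes it below -/
import Mathlib

section
/- For every integer k ≥ 2, every h ∈ Γ, and all w, z ∈ 𝔹ⁿ, Θ_{hw}^{(k)}(z) · (conj J(h,w))^k = Θ_w^{(k)}(z). -/
open scoped BigOperators
open Complex MeasureTheory Filter Topology Matrix

namespace BallPaper

noncomputable section

variable {n : ℕ}

/-- The unit ball in ℂⁿ. -/
def ball (n : ℕ) : Set (Fin n → ℂ) := {z | ∑ i, ‖z i‖ ^ 2 < 1}

/-- ⟨z,w⟩ = z₁ conj w₁ + ... + zₙ conj wₙ − 1. -/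
def pair (z w : Fin n → ℂ) : ℂ := ∑ i, z i * star (w i) - 1

/-- The Hermitian form of signature (n,1) on ℂ^{n+1}:
⟨⟨u,v⟩⟩ = u₁ conj v₁ + ... + uₙ conj vₙ − u_{n+1} conj v_{n+1}. -/
def herm (u v : Fin (n + 1) → ℂ) : ℂ :=
  ∑ i : Fin n, u i.castSucc * star (v i.castSucc) - u (Fin.last n) * star (v (Fin.last n))

/-- SU(n,1): determinant-one matrices preserving the (n,1) Hermitian form. -/
def SU (n : ℕ) : Set (Matrix (Fin (n + 1)) (Fin (n + 1)) ℂ) :=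
  {A | A.det = 1 ∧ ∀ u v, herm (A.mulVec u) (A.mulVec v) = herm u v}

/-- The denominator a_{n+1,1} z₁ + ... + a_{n+1,n} zₙ + a_{n+1,n+1} of the
fractional-linear action. -/
def denom (A : Matrix (Fin (n + 1)) (Fin (n + 1)) ℂ) (z : Fin n → ℂ) : ℂ :=
  ∑ j : Fin n, A (Fin.last n) j.castSucc * z j + A (Fin.last n) (Fin.last n)

/-- The fractional-linear action of a matrix on ℂⁿ (defined on the ball). -/
def act (A : Matrix (Fin (n + 1)) (Fin (n + 1)) ℂ) (z : Fin n → ℂ) : Fin n → ℂ :=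
  fun j => (∑ l : Fin n, A j.castSucc l.castSucc * z l + A j.castSucc (Fin.last n)) / denom A z

/-- The complex Jacobian J(A,z) = (denominator)^{-(n+1)}. -/
def jac (A : Matrix (Fin (n + 1)) (Fin (n + 1)) ℂ) (z : Fin n → ℂ) : ℂ :=
  (denom A z)⁻¹ ^ (n + 1)

/-- The Bergman kernel K(z,w) = (n!/πⁿ) (−⟨z,w⟩)^{−(n+1)}. -/
def Kc (z w : Fin n → ℂ) : ℂ :=
  (((Nat.factorial n : ℝ) / Real.pi ^ n : ℝ) : ℂ) * (-(pair z w))⁻¹ ^ (n + 1)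

/-- K(z,z) as a real-valued function: K(z,z) = (n!/πⁿ) (1−|z|²)^{−(n+1)}. -/
def Kr (z : Fin n → ℂ) : ℝ :=
  (Nat.factorial n : ℝ) / Real.pi ^ n * ((1 - ∑ i, ‖z i‖ ^ 2)⁻¹) ^ (n + 1)

/-- c(𝔹ⁿ,k) = C((n+1)(k−1)+n, n). -/
def cB (n k : ℕ) : ℕ := Nat.choose ((n + 1) * (k - 1) + n) n

/-- The last index of Fin n. -/
def lastI (n : ℕ) (hn : 0 < n) : Fin n := ⟨n - 1, by omega⟩

/-- The geodesic C̃₀ = {z ∈ 𝔹ⁿ : z₁ = ... = z_{n−1} = 0, zₙ ∈ (−1,1) real}. -/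
def geo0 (n : ℕ) (hn : 0 < n) : Set (Fin n → ℂ) :=
  {z | (∀ i : Fin n, (i : ℕ) < n - 1 → z i = 0) ∧ (z (lastI n hn)).im = 0 ∧
    -1 < (z (lastI n hn)).re ∧ (z (lastI n hn)).re < 1}

/-- The point (0,...,0,x) of C̃₀. -/
def curve (n : ℕ) (hn : 0 < n) (x : ℝ) : Fin n → ℂ :=
  fun i => if i = lastI n hn then (x : ℂ) else 0

/-- The vector (X,1) ∈ ℂ^{n+1}. -/
def snoc1 (X : Fin n → ℂ) : Fin (n + 1) → ℂ := Fin.snoc X 1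

/-- The matrix A_γ, with columns v₁,...,v_{n−1},
⟨X,Y⟩⁻¹(X,1) + (1/2)(Y,1), ⟨X,Y⟩⁻¹(X,1) − (1/2)(Y,1). -/
def Amat (n : ℕ) (v : Fin (n - 1) → Fin (n + 1) → ℂ) (X Y : Fin n → ℂ) :
    Matrix (Fin (n + 1)) (Fin (n + 1)) ℂ :=
  Matrix.of fun i j =>
    if h : (j : ℕ) < n - 1 then v ⟨j, h⟩ i
    else if (j : ℕ) = n - 1 then ((pair X Y)⁻¹ • snoc1 X + (2 : ℂ)⁻¹ • snoc1 Y) i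
    else ((pair X Y)⁻¹ • snoc1 X - (2 : ℂ)⁻¹ • snoc1 Y) i

/-- σ = diag(1,...,1,−1). -/
def sigmaM (n : ℕ) : Matrix (Fin (n + 1)) (Fin (n + 1)) ℂ :=
  Matrix.diagonal fun i => if i = Fin.last n then -1 else 1

/-- Inverse hyperbolic cosine. -/
def arcosh (x : ℝ) : ℝ := Real.log (x + Real.sqrt (x ^ 2 - 1))

/-- Inverse hyperbolic tangent. -/
def artanh (x : ℝ) : ℝ := Real.log ((1 + x) / (1 - x)) / 2

/-- The hyperbolic (Bergman) distance on the ball, determined by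
cosh²(ρ(z,w)/2) = ⟨z,w⟩⟨w,z⟩/(⟨z,z⟩⟨w,w⟩). -/
def rho (z w : Fin n → ℂ) : ℝ :=
  2 * arcosh (Real.sqrt ((pair z w * pair w z).re / (pair z z * pair w w).re))

/-- A discrete subgroup Γ of SU(n,1) acting freely on the ball with compact quotient. -/
structure DiscreteGroup (n : ℕ) where
  Γ : Set (Matrix (Fin (n + 1)) (Fin (n + 1)) ℂ)
  sub_SU : Γ ⊆ SU n
  one_mem : 1 ∈ Γ
  mul_mem : ∀ {A B}, A ∈ Γ → B ∈ Γ → A * B ∈ Γ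
  inv_mem : ∀ {A}, A ∈ Γ → A⁻¹ ∈ Γ
  discrete : DiscreteTopology ↥Γ
  free : ∀ A ∈ Γ, (∃ z ∈ ball n, act A z = z) → A = 1
  cocompact : ∃ F : Set (Fin n → ℂ), F ⊆ ball n ∧ IsCompact F ∧
    ∀ z ∈ ball n, ∃ A ∈ Γ, act A z ∈ F

/-- A hyperbolic element γ of Γ, with real eigenvalues, real fixed points X, Y on the
boundary, eigenvalue data λ, and the eigenvectors v₁,...,v_{n−1} for eigenvalues ±1,
orthonormal with respect to the form ⟨⟨.,.⟩⟩. -/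
structure HypElt (n : ℕ) (G : DiscreteGroup n) where
  γ : Matrix (Fin (n + 1)) (Fin (n + 1)) ℂ
  mem : γ ∈ G.Γ
  ne_one : γ ≠ 1
  eig_real : ∀ μ ∈ spectrum ℂ γ, μ.im = 0
  X : Fin n → ℂ
  Y : Fin n → ℂ
  X_bd : ∑ i, ‖X i‖ ^ 2 = 1
  Y_bd : ∑ i, ‖Y i‖ ^ 2 = 1
  X_real : ∀ i, (X i).im = 0
  Y_real : ∀ i, (Y i).im = 0
  lam : ℝ
  lam_sq : 1 < lam ^ 2
  eigX : γ.mulVec (snoc1 X) = (lam : ℂ) • snoc1 X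
  eigY : γ.mulVec (snoc1 Y) = ((lam : ℂ))⁻¹ • snoc1 Y
  primitive : ∀ A ∈ G.Γ, ∀ m : ℕ, 2 ≤ m → A ^ m ≠ γ
  v : Fin (n - 1) → Fin (n + 1) → ℂ
  alph : Fin (n - 1) → ℂ
  alph_pm : ∀ j, alph j = 1 ∨ alph j = -1
  v_eig : ∀ j, γ.mulVec (v j) = alph j • v j
  v_on : ∀ j l, herm (v j) (v l) = if j = l then 1 else 0

variable {G : DiscreteGroup n}

/-- The matrix A_γ associated to the hyperbolic element γ. -/
def HypElt.A (H : HypElt n G) : Matrix (Fin (n + 1)) (Fin (n + 1)) ℂ :=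
  Amat n H.v H.X H.Y

/-- γ₀ = A_γ⁻¹ γ A_γ. -/
def HypElt.g0 (H : HypElt n G) : Matrix (Fin (n + 1)) (Fin (n + 1)) ℂ :=
  (H.A)⁻¹ * H.γ * H.A

/-- T = (λ²−1)/(λ²+1), the last coordinate of γ₀(0). -/
def HypElt.T (H : HypElt n G) : ℝ := (H.lam ^ 2 - 1) / (H.lam ^ 2 + 1)

/-- The geodesic C̃ in 𝔹ⁿ with endpoints X, Y, as the image of C̃₀ under A_γ. -/
def HypElt.Ct (H : HypElt n G) (hn : 0 < n) : Set (Fin n → ℂ) :=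
  act H.A '' geo0 n hn

/-- The length l(C) of the closed geodesic C, the hyperbolic distance from 0 to γ₀(0). -/
def HypElt.lenC (H : HypElt n G) : ℝ :=
  rho (0 : Fin n → ℂ) (act H.g0 (0 : Fin n → ℂ))

/-- A (measure-theoretic) fundamental domain for the action of Γ on the ball. -/
def IsFundDom (G : DiscreteGroup n) (F : Set (Fin n → ℂ)) : Prop :=
  F ⊆ ball n ∧ MeasurableSet F ∧ (∀ z ∈ ball n, ∃ A ∈ G.Γ, act A z ∈ F) ∧
    ∀ A ∈ G.Γ, A ≠ 1 → volume {z ∈ F | act A z ∈ F} = 0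

/-- The automorphy condition f(Az) J(A,z)^k = f(z). -/
def Automorphic (G : DiscreteGroup n) (k : ℕ) (f : (Fin n → ℂ) → ℂ) : Prop :=
  ∀ A ∈ G.Γ, ∀ z ∈ ball n, f (act A z) * jac A z ^ k = f z

/-- Membership in H̃⁰_Γ(k): holomorphic on the ball and automorphic of weight k. -/
def Htilde (G : DiscreteGroup n) (k : ℕ) (f : (Fin n → ℂ) → ℂ) : Prop :=
  DifferentiableOn ℂ f (ball n) ∧ Automorphic G k f

/-- The inner product (f,g) = ∫_M f ḡ K(z,z)^{−k} dV = ∫_F f ḡ K(z,z)^{1−k} dV_e,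
computed over a fundamental domain F. -/
def iprod (F : Set (Fin n → ℂ)) (k : ℕ) (f g : (Fin n → ℂ) → ℂ) : ℂ :=
  ∫ z in F, f z * star (g z) * ((Kr z ^ ((1 : ℤ) - (k : ℤ)) : ℝ) : ℂ)

/-- The Poincaré series Θ_w^{(k)}(z) = c(𝔹ⁿ,k) Σ_{A∈Γ} K(Az,w)^k J(A,z)^k. -/
def ThetaPt (G : DiscreteGroup n) (k : ℕ) (w z : Fin n → ℂ) : ℂ :=
  (cB n k : ℂ) * ∑' A : ↥G.Γ, Kc (act (A : Matrix (Fin (n + 1)) (Fin (n + 1)) ℂ) z) w ^ k *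
    jac (A : Matrix (Fin (n + 1)) (Fin (n + 1)) ℂ) z ^ k

/-- The relative Poincaré series
Θ_C^{(k)}(z) = ∫_C Θ_w^{(k)}(z) K(w,w)^{−k/2} ((A_γ⁻¹)*φ)(w), written out over one
period of C̃, parametrized by w = A_γ(0,...,0,x), x ∈ [0,T]. -/
def ThetaC (hn : 0 < n) (H : HypElt n G) (k : ℕ) (z : Fin n → ℂ) : ℂ :=
  ∫ x in (0 : ℝ)..H.T, ThetaPt G k (act H.A (curve n hn x)) z *
    ((Kr (act H.A (curve n hn x)) ^ (-(k : ℝ) / 2) : ℝ) : ℂ) *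
    ((Kr (curve n hn x) ^ (((n : ℝ) + 1))⁻¹ : ℝ) : ℂ)

/-- The set of integer powers of a matrix. -/
def zpows (g : Matrix (Fin (n + 1)) (Fin (n + 1)) ℂ) :
    Set (Matrix (Fin (n + 1)) (Fin (n + 1)) ℂ) := {h | ∃ m : ℤ, h = g ^ m}

/-- The conjugate group A_γ⁻¹ Γ A_γ. -/
def conjGrp (G : DiscreteGroup n) (H : HypElt n G) :
    Set (Matrix (Fin (n + 1)) (Fin (n + 1)) ℂ) :=
  (fun g => (H.A)⁻¹ * g * H.A) '' G.Γ

end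

end BallPaper

/-!
Reindex the sum over `Γ` by `B ↦ h B`. Termwise the claim then follows from the cocycle rule
`J(hB, z) = J(B, z) J(h, Bz)` and the invariance `K(Az, Aw) J(A, z) conj J(A, w) = K(z, w)` of
the Bergman kernel under `A ∈ SU(n,1)`. The latter is the identity
`⟨Az, Aw⟩ = ⟨z, w⟩ / (d_A(z) conj d_A(w))` (with `d_A` the denominator of the action), i.e.
the invariance of the Hermitian form evaluated on the lifts `(z, 1)`, `(w, 1)`, since
`A (z, 1) = d_A(z) (Az, 1)`.
-/

namespace BallPaper

variable {n : ℕ}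

local notation "Mat" n => Matrix (Fin (n + 1)) (Fin (n + 1)) ℂ

lemma pair_self_re (z : Fin n → ℂ) : (pair z z).re = ∑ i, ‖z i‖ ^ 2 - 1 := by
  simp only [pair, RCLike.star_def, Complex.mul_conj', Complex.sub_re, Complex.re_sum,
    Complex.one_re]
  norm_cast

lemma mem_ball_iff_pair_self_re_neg {z : Fin n → ℂ} : z ∈ ball n ↔ (pair z z).re < 0 := by
  rw [pair_self_re, sub_neg]
  rfl

lemma herm_snoc1 (z w : Fin n → ℂ) : herm (snoc1 z) (snoc1 w) = pair z w := by
  simp [herm, snoc1, pair]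

lemma herm_smul (c d : ℂ) (u v : Fin (n + 1) → ℂ) :
    herm (c • u) (d • v) = c * star d * herm u v := by
  simp only [herm, Pi.smul_apply, smul_eq_mul, star_mul', mul_sub, Finset.mul_sum]
  congr 1
  · exact Finset.sum_congr rfl fun i _ => by ring
  · ring

lemma mulVec_snoc1 (A : Mat n) (z : Fin n → ℂ) :
    A.mulVec (snoc1 z) = Fin.snoc
      (fun i : Fin n => ∑ l, A i.castSucc l.castSucc * z l + A i.castSucc (Fin.last n))
      (denom A z) := by
  funext i
  refine Fin.lastCases ?_ (fun i => ?_) i <;>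
    simp [Matrix.mulVec, dotProduct, Fin.sum_univ_castSucc, snoc1, denom]

lemma mulVec_snoc1_last (A : Mat n) (z : Fin n → ℂ) :
    A.mulVec (snoc1 z) (Fin.last n) = denom A z := by
  rw [mulVec_snoc1, Fin.snoc_last]

lemma mulVec_snoc1_eq_smul (A : Mat n) {z : Fin n → ℂ} (hd : denom A z ≠ 0) :
    A.mulVec (snoc1 z) = denom A z • snoc1 (act A z) := by
  rw [mulVec_snoc1]
  funext i
  refine Fin.lastCases ?_ (fun i => ?_) i
  · simp [snoc1]
  · simp only [Fin.snoc_castSucc, Pi.smul_apply, snoc1, smul_eq_mul, act]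
    field_simp

lemma denom_mul (A B : Mat n) {z : Fin n → ℂ} (hB : denom B z ≠ 0) :
    denom (A * B) z = denom B z * denom A (act B z) := by
  rw [← mulVec_snoc1_last, ← Matrix.mulVec_mulVec, mulVec_snoc1_eq_smul B hB,
    Matrix.mulVec_smul, Pi.smul_apply, mulVec_snoc1_last, smul_eq_mul]

lemma act_mul (A B : Mat n) {z : Fin n → ℂ} (hB : denom B z ≠ 0)
    (hA : denom A (act B z) ≠ 0) : act (A * B) z = act A (act B z) := by
  have hAB : denom (A * B) z ≠ 0 := by
    rw [denom_mul A B hB]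
    exact mul_ne_zero hB hA
  have h := Matrix.mulVec_mulVec (snoc1 z) A B
  rw [mulVec_snoc1_eq_smul B hB, Matrix.mulVec_smul, mulVec_snoc1_eq_smul A hA,
    mulVec_snoc1_eq_smul (A * B) hAB, denom_mul A B hB, smul_smul] at h
  funext i
  simpa [snoc1, mul_ne_zero hB hA] using (congrFun h i.castSucc).symm

lemma jac_mul (A B : Mat n) {z : Fin n → ℂ} (hB : denom B z ≠ 0) :
    jac (A * B) z = jac B z * jac A (act B z) := by
  rw [jac, jac, jac, denom_mul A B hB, mul_inv, mul_pow]

/-- If `A (z, 1)` had last coordinate `0`, its Hermitian norm would be `≥ 0`, whereas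
`A` preserves the norm of `(z, 1)`, which is `< 0`. -/
lemma denom_ne_zero {A : Mat n} (hA : A ∈ SU n) {z : Fin n → ℂ} (hz : z ∈ ball n) :
    denom A z ≠ 0 := by
  intro h0
  have hu : A.mulVec (snoc1 z) (Fin.last n) = 0 := by rw [mulVec_snoc1_last, h0]
  have hnonneg : 0 ≤ (herm (A.mulVec (snoc1 z)) (A.mulVec (snoc1 z))).re := by
    simp only [herm, hu, zero_mul, sub_zero, RCLike.star_def, Complex.mul_conj',
      Complex.re_sum]
    norm_cast
    positivity
  rw [hA.2, herm_snoc1] at hnonneg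
  exact (mem_ball_iff_pair_self_re_neg.mp hz).not_ge hnonneg

lemma pair_act {A : Mat n} (hA : A ∈ SU n) {z w : Fin n → ℂ} (hz : denom A z ≠ 0)
    (hw : denom A w ≠ 0) :
    pair (act A z) (act A w) = pair z w / (denom A z * star (denom A w)) := by
  have h := hA.2 (snoc1 z) (snoc1 w)
  rw [mulVec_snoc1_eq_smul A hz, mulVec_snoc1_eq_smul A hw, herm_smul, herm_snoc1,
    herm_snoc1] at h
  rw [eq_div_iff (mul_ne_zero hz (star_ne_zero.mpr hw))]
  linear_combination h

lemma act_mem_ball {A : Mat n} (hA : A ∈ SU n) {z : Fin n → ℂ} (hz : z ∈ ball n) :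
    act A z ∈ ball n := by
  have hd := denom_ne_zero hA hz
  rw [mem_ball_iff_pair_self_re_neg, pair_act hA hd hd, RCLike.star_def, Complex.mul_conj',
    ← Complex.ofReal_pow, Complex.div_ofReal_re]
  exact div_neg_of_neg_of_pos (mem_ball_iff_pair_self_re_neg.mp hz) (by positivity)

lemma Kc_act_mul_jac_mul_star_jac {A : Mat n} (hA : A ∈ SU n) {z w : Fin n → ℂ}
    (hz : z ∈ ball n) (hw : w ∈ ball n) :
    Kc (act A z) (act A w) * jac A z * star (jac A w) = Kc z w := by
  have hdz := denom_ne_zero hA hz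
  have hdw := star_ne_zero.mpr (denom_ne_zero hA hw)
  rw [Kc, Kc, jac, jac, pair_act hA hdz (denom_ne_zero hA hw), star_pow,
    star_inv₀, mul_assoc, mul_assoc, ← mul_pow, ← mul_pow]
  congr 2
  field_simp

lemma Kc_act_mul_jac_mul_star_jac_left {h B : Mat n} (hh : h ∈ SU n) (hB : B ∈ SU n)
    {z w : Fin n → ℂ} (hz : z ∈ ball n) (hw : w ∈ ball n) :
    Kc (act (h * B) z) (act h w) * jac (h * B) z * star (jac h w) = Kc (act B z) w * jac B z := by
  have hBz := act_mem_ball hB hz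
  rw [act_mul h B (denom_ne_zero hB hz) (denom_ne_zero hh hBz),
    jac_mul h B (denom_ne_zero hB hz), ← Kc_act_mul_jac_mul_star_jac hh hBz hw]
  ring

lemma isUnit_det_of_mem_SU {A : Mat n} (hA : A ∈ SU n) : IsUnit A.det :=
  hA.1 ▸ isUnit_one

noncomputable def DiscreteGroup.mulLeft (G : DiscreteGroup n) {h : Mat n} (hh : h ∈ G.Γ) :
    G.Γ ≃ G.Γ where
  toFun B := ⟨h * B, G.mul_mem hh B.2⟩
  invFun B := ⟨h⁻¹ * B, G.mul_mem (G.inv_mem hh) B.2⟩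
  left_inv _ := Subtype.ext <|
    Matrix.nonsing_inv_mul_cancel_left _ _ (isUnit_det_of_mem_SU (G.sub_SU hh))
  right_inv _ := Subtype.ext <|
    Matrix.mul_nonsing_inv_cancel_left _ _ (isUnit_det_of_mem_SU (G.sub_SU hh))

end BallPaper

open BallPaper in
theorem ThetaPt_transf_general (n : ℕ) (G : BallPaper.DiscreteGroup n) (k : ℕ)
    (h : Matrix (Fin (n + 1)) (Fin (n + 1)) ℂ) (hh : h ∈ G.Γ)
    (w z : Fin n → ℂ) (hw : w ∈ ball n) (hz : z ∈ ball n) :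
    ThetaPt G k (act h w) z * star (jac h w) ^ k = ThetaPt G k w z := by
  rw [ThetaPt, ThetaPt, mul_assoc, ← tsum_mul_right, ← (G.mulLeft hh).tsum_eq]
  congr 1
  refine tsum_congr fun B => ?_
  simp only [← mul_pow]
  exact congrArg (· ^ k) <|
    Kc_act_mul_jac_mul_star_jac_left (G.sub_SU hh) (G.sub_SU B.2) hz hw

open BallPaper in
/-- Θ_{hw}^{(k)}(z) · (conj J(h,w))^k = Θ_w^{(k)}(z) for h ∈ Γ. -/
theorem ThetaPt_transf (n : ℕ) (G : BallPaper.DiscreteGroup n) (k : ℕ) (hk : 2 ≤ k)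
    (h : Matrix (Fin (n + 1)) (Fin (n + 1)) ℂ) (hh : h ∈ G.Γ)
    (w z : Fin n → ℂ) (hw : w ∈ ball n) (hz : z ∈ ball n) :
    ThetaPt G k (act h w) z * star (jac h w) ^ k = ThetaPt G k w z :=
  ThetaPt_transf_general n G k h hh w z hw hz
end

section
/- Let n ≥ 1 be an integer and let T be a real number with 0 < T < 1. Then, as the integer k → ∞, c(𝔹ⁿ,k)·(n!/πⁿ)^{2/(n+1)}·∫₀^{T} [∫_{−1}^{1} (1−x²)^{((n+1)k)/2 − 1}·(1−xu)^{−(n+1)k} dx]·(1−u²)^{((n+1)k)/2 − 1} du is asymptotic to k^{n−1/2}·√2·(n+1)^{n−1/2}·π^{−(3n−1)/(2n+2)}·(n!)^{−(n−1)/(n+1)}·arctanh(T), i.e., the ratio of the two sides tends to 1. (For T = (λ²−1)/(λ²+1) with λ² > 1 one has arctanh(T) = ln|λ|.) -/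
open scoped BigOperators
open Complex MeasureTheory Filter Topology Matrix

/-!
The Möbius substitution `x = (y + u) / (1 + y u)` turns the inner integral into
`(1 - u²)^(-m/2) ∫₋₁¹ (1 - y²)^(m/2 - 1) dy` with `m = (n + 1) k`, so the double integral
factors as `∫₋₁¹ (1 - y²)^(m/2 - 1) dy · ∫₀^T (1 - u²)⁻¹ du`, and `y = cos θ` turns the first
factor into `S (m - 1)`, where `S j = ∫₀^π sin^j`. Wallis' invariant `(j + 1) S j S (j + 1) = 2π`
together with the monotonicity of `S` gives `S j ~ √(2π / j)`, while
`c(𝔹ⁿ, k) = C((n + 1) k - 1, n) ~ ((n + 1) k)^n / n!`. Multiplying out the two equivalents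
leaves the stated power of `k` and the constant.
-/

open scoped Real
open intervalIntegral Asymptotics Filter Topology Set

theorem Asymptotics.IsEquivalent.sqrt {α : Type*} {l : Filter α} {u v : α → ℝ} (h : u ~[l] v)
    (hv : 0 ≤ v) : (fun x => √(u x)) ~[l] fun x => √(v x) := by
  convert h.rpow hv (r := 1 / 2) using 1 <;> funext x <;> exact Real.sqrt_eq_rpow _

theorem isEquivalent_natCast_sub_one :
    (fun m : ℕ => ((m - 1 : ℕ) : ℝ)) ~[atTop] fun m => (m : ℝ) := by
  refine (IsEquivalent.refl.sub_isLittleO ((isLittleO_one_left_iff ℝ).2 ?_)).congr_left ?_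
  · simpa using tendsto_natCast_atTop_atTop
  · filter_upwards [eventually_ge_atTop 1] with m hm
    simp [Nat.cast_sub hm]

theorem tendsto_succ_mul_sub_one_atTop (n : ℕ) :
    Tendsto (fun k : ℕ => (n + 1) * k - 1) atTop atTop :=
  (tendsto_sub_atTop_nat 1).comp (tendsto_id.const_mul_atTop' n.succ_pos)

theorem isEquivalent_succ_mul_sub_one (n : ℕ) :
    (fun k : ℕ => (((n + 1) * k - 1 : ℕ) : ℝ)) ~[atTop] fun k => ((n : ℝ) + 1) * k :=
  (isEquivalent_natCast_sub_one.comp_tendsto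
    (tendsto_id.const_mul_atTop' n.succ_pos)).congr_right (Eventually.of_forall fun k => by simp)

theorem integral_sin_pow_mul_integral_sin_pow_succ (m : ℕ) :
    (m + 1) * (∫ x in 0..π, Real.sin x ^ m) * (∫ x in 0..π, Real.sin x ^ (m + 1)) = 2 * π := by
  induction m with
  | zero => norm_num; ring
  | succ m ih =>
    rw [integral_sin_pow (n := m)]
    simp only [Real.sin_zero, Real.sin_pi]
    push_cast
    field_simp
    linear_combination ((m : ℝ) + 2) * ih

theorem integral_sin_pow_sq_mem_Icc {m : ℕ} (hm : 0 < m) :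
    (∫ x in 0..π, Real.sin x ^ m) ^ 2 ∈ Icc (2 * π / (m + 1)) (2 * π / m) := by
  obtain ⟨m, rfl⟩ : ∃ m', m = m' + 1 := ⟨m - 1, by omega⟩
  set S := ∫ x in 0..π, Real.sin x ^ (m + 1)
  have hpos : 0 < S := integral_sin_pow_pos _
  have h₁ := integral_sin_pow_mul_integral_sin_pow_succ m
  have h₂ := integral_sin_pow_mul_integral_sin_pow_succ (m + 1)
  have h₁' := integral_sin_pow_succ_le (n := m)
  have h₂' := integral_sin_pow_succ_le (n := m + 1)
  push_cast at *
  constructor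
  · rw [div_le_iff₀ (by positivity)]
    nlinarith [mul_le_mul_of_nonneg_left h₂' (by positivity : (0 : ℝ) ≤ (m + 1 + 1) * S)]
  · rw [le_div_iff₀ (by positivity)]
    nlinarith [mul_le_mul_of_nonneg_left h₁' (by positivity : (0 : ℝ) ≤ (m + 1) * S)]

theorem isEquivalent_integral_sin_pow :
    (fun m : ℕ => ∫ x in 0..π, Real.sin x ^ m) ~[atTop] fun m => √(2 * π / m) := by
  have hsq : (fun m : ℕ => (∫ x in 0..π, Real.sin x ^ m) ^ 2) ~[atTop] fun m => 2 * π / m := by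
    refine (isEquivalent_iff_tendsto_one ?_).mpr ?_
    · filter_upwards [eventually_gt_atTop 0] with m hm using by positivity
    refine tendsto_of_tendsto_of_tendsto_of_le_of_le' (tendsto_natCast_div_add_atTop 1)
      tendsto_const_nhds ?_ ?_
    · filter_upwards [eventually_gt_atTop 0] with m hm
      rw [Pi.div_apply, le_div_iff₀ (by positivity)]
      calc (m : ℝ) / (m + 1) * (2 * π / m) = 2 * π / (m + 1) := by field_simp
        _ ≤ _ := (integral_sin_pow_sq_mem_Icc hm).1
    · filter_upwards [eventually_gt_atTop 0] with m hm
      rw [Pi.div_apply, div_le_one (by positivity)]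
      exact (integral_sin_pow_sq_mem_Icc hm).2
  simpa only [fun m => Real.sqrt_sq (integral_sin_pow_pos m).le] using
    hsq.sqrt fun m => by positivity

theorem continuous_one_sub_sq_rpow {a : ℝ} (ha : 0 ≤ a) :
    Continuous fun y : ℝ => (1 - y ^ 2) ^ a :=
  (continuous_const.sub (continuous_pow 2)).rpow_const fun _ => Or.inr ha

theorem integral_one_sub_sq_rpow_half_eq_integral_sin_pow (j : ℕ) :
    ∫ y in (-1 : ℝ)..1, (1 - y ^ 2) ^ ((j : ℝ) / 2) = ∫ x in 0..π, Real.sin x ^ (j + 1) := by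
  have hsub := integral_comp_mul_deriv (a := 0) (b := π) (f' := fun x => -Real.sin x)
    (fun x _ => Real.hasDerivAt_cos x) Real.continuous_sin.neg.continuousOn
    (continuous_one_sub_sq_rpow (a := (j : ℝ) / 2) (by positivity))
  rw [Real.cos_zero, Real.cos_pi] at hsub
  rw [integral_symm, ← hsub, ← intervalIntegral.integral_neg]
  refine integral_congr fun x hx => ?_
  have hsin : 0 ≤ Real.sin x :=
    Real.sin_nonneg_of_mem_Icc (by rwa [uIcc_of_le Real.pi_pos.le] at hx)
  have hpow : (Real.sin x ^ 2) ^ ((j : ℝ) / 2) = Real.sin x ^ j := by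
    rw [← Real.rpow_natCast (Real.sin x) 2, ← Real.rpow_mul hsin]
    push_cast
    rw [mul_div_cancel₀ _ two_ne_zero, Real.rpow_natCast]
  simp only [Function.comp_apply, ← Real.sin_sq, hpow]
  ring

theorem rpow_div_sq_mul_rpow_div_mul_div_sq {p q m : ℝ} (hp : 0 < p) (hq : 0 < q) :
    (q / p ^ 2) ^ (m / 2 - 1) * (q / p) ^ (-m) * (q / p ^ 2) = q ^ (-(m / 2)) := by
  rw [mul_right_comm, ← Real.rpow_add_one (by positivity), sub_add_cancel,
    Real.rpow_def_of_pos (by positivity), Real.rpow_def_of_pos (by positivity),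
    Real.rpow_def_of_pos hq, ← Real.exp_add, Real.log_div hq.ne' (by positivity),
    Real.log_div hq.ne' hp.ne', Real.log_pow]
  ring_nf

theorem one_add_mul_pos {y u : ℝ} (hy : y ∈ Icc (-1 : ℝ) 1) (hu : u ∈ Ioo (-1 : ℝ) 1) :
    0 < 1 + y * u := by
  obtain ⟨hy₀, hy₁⟩ := hy
  obtain ⟨hu₀, hu₁⟩ := hu
  nlinarith [mul_nonneg (sub_nonneg.2 hy₁) (sub_nonneg.2 hu₁.le),
    mul_nonneg (neg_le_iff_add_nonneg.1 hy₀) (neg_lt_iff_pos_add.1 hu₀).le]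

theorem integral_one_sub_sq_rpow_mul_one_sub_mul_rpow {m u : ℝ} (hm : 2 ≤ m)
    (hu : u ∈ Ioo (-1 : ℝ) 1) :
    ∫ x in (-1 : ℝ)..1, (1 - x ^ 2) ^ (m / 2 - 1) * (1 - x * u) ^ (-m) =
      (1 - u ^ 2) ^ (-(m / 2)) * ∫ y in (-1 : ℝ)..1, (1 - y ^ 2) ^ (m / 2 - 1) := by
  have hq : 0 < 1 - u ^ 2 := by nlinarith [hu.1, hu.2]
  have hIcc : uIcc (-1 : ℝ) 1 = Icc (-1) 1 := uIcc_of_le (by norm_num)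
  -- `φ` is the hyperbolic isometry of `(-1, 1)` taking `0` to `u`, so both `1 - φ y ^ 2` and
  -- `1 - φ y * u` split off a power of `1 + y * u` (`h₁`, `h₂` below).
  set φ : ℝ → ℝ := fun y => (y + u) / (1 + y * u) with hφ_def
  have hφ : ∀ y ∈ uIcc (-1 : ℝ) 1, HasDerivAt φ ((1 - u ^ 2) / (1 + y * u) ^ 2) y := by
    intro y hy
    have hp := one_add_mul_pos (hIcc ▸ hy) hu
    refine (((hasDerivAt_id' y).add_const u).div
      (((hasDerivAt_id' y).mul_const u).const_add 1) hp.ne').congr_deriv ?_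
    field_simp
    ring
  have hφ' : ContinuousOn (fun y => (1 - u ^ 2) / (1 + y * u) ^ 2) (uIcc (-1 : ℝ) 1) :=
    continuousOn_const.div (by fun_prop) fun y hy =>
      (pow_pos (one_add_mul_pos (hIcc ▸ hy) hu) 2).ne'
  have hmaps : φ '' uIcc (-1 : ℝ) 1 ⊆ Icc (-1) 1 := by
    rintro _ ⟨y, hy, rfl⟩
    have hp := one_add_mul_pos (hIcc ▸ hy) hu
    rw [hIcc] at hy
    constructor
    · rw [le_div_iff₀ hp]; nlinarith [hy.1, hy.2, hu.1, hu.2]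
    · rw [div_le_iff₀ hp]; nlinarith [hy.1, hy.2, hu.1, hu.2]
  have hg : ContinuousOn (fun x : ℝ => (1 - x ^ 2) ^ (m / 2 - 1) * (1 - x * u) ^ (-m))
      (Icc (-1) 1) := by
    refine (continuous_one_sub_sq_rpow (by linarith)).continuousOn.mul ?_
    refine ContinuousOn.rpow_const (by fun_prop) fun x hx => Or.inl ?_
    have := one_add_mul_pos hx (u := -u) ⟨by linarith [hu.2], by linarith [hu.1]⟩
    linarith [mul_neg x u]
  have hsub := integral_comp_mul_deriv' hφ hφ' (hg.mono hmaps)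
  have hφ₀ : φ (-1) = -1 := by
    rw [hφ_def, div_eq_iff (by nlinarith [hu.2])]; ring
  have hφ₁ : φ 1 = 1 := by
    rw [hφ_def, div_eq_iff (by nlinarith [hu.1])]; ring
  rw [hφ₀, hφ₁] at hsub
  rw [← hsub, ← intervalIntegral.integral_const_mul]
  refine integral_congr fun y hy => ?_
  have hp := one_add_mul_pos (hIcc ▸ hy) hu
  rw [hIcc] at hy
  have h₁ : 1 - φ y ^ 2 = (1 - y ^ 2) * ((1 - u ^ 2) / (1 + y * u) ^ 2) := by
    rw [hφ_def]; field_simp; ring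
  have h₂ : 1 - φ y * u = (1 - u ^ 2) / (1 + y * u) := by
    rw [hφ_def]; field_simp; ring
  simp only [Function.comp_apply, h₁, h₂]
  rw [Real.mul_rpow (by nlinarith [hy.1, hy.2]) (by positivity)]
  linear_combination (1 - y ^ 2) ^ (m / 2 - 1) * rpow_div_sq_mul_rpow_div_mul_div_sq (m := m) hp hq

namespace BallPaper

theorem hasDerivAt_artanh {x : ℝ} (hx : x ∈ Ioo (-1 : ℝ) 1) :
    HasDerivAt artanh (1 - x ^ 2)⁻¹ x := by
  have hx₁ : 0 < 1 + x := by linarith [hx.1]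
  have hx₂ : 0 < 1 - x := by linarith [hx.2]
  have hq : HasDerivAt (fun x : ℝ => (1 + x) / (1 - x)) (2 / (1 - x) ^ 2) x := by
    refine (((hasDerivAt_id' x).const_add 1).div ((hasDerivAt_id' x).const_sub 1)
      hx₂.ne').congr_deriv ?_
    field_simp
    ring
  refine (((Real.hasDerivAt_log (div_pos hx₁ hx₂).ne').comp x hq).div_const 2).congr_deriv ?_
  have : 1 - x ^ 2 ≠ 0 := by nlinarith
  field_simp
  ring

theorem integral_inv_one_sub_sq {T : ℝ} (hT : T ∈ Ioo (-1 : ℝ) 1) :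
    ∫ u in (0 : ℝ)..T, (1 - u ^ 2)⁻¹ = artanh T := by
  have hsub : uIcc 0 T ⊆ Ioo (-1 : ℝ) 1 := ordConnected_Ioo.uIcc_subset (by norm_num) hT
  have hcont : ContinuousOn (fun u : ℝ => (1 - u ^ 2)⁻¹) (uIcc 0 T) :=
    ContinuousOn.inv₀ (by fun_prop) fun u hu => by nlinarith [(hsub hu).1, (hsub hu).2]
  rw [integral_eq_sub_of_hasDerivAt (fun u hu => hasDerivAt_artanh (hsub hu))
    hcont.intervalIntegrable]
  simp [artanh]

theorem integral_integral_one_sub_mul_rpow {m T : ℝ} (hm : 2 ≤ m) (hT : T ∈ Ioo (-1 : ℝ) 1) :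
    ∫ u in (0 : ℝ)..T,
        (∫ x in (-1 : ℝ)..1, (1 - x ^ 2) ^ (m / 2 - 1) * (1 - x * u) ^ (-m)) *
          (1 - u ^ 2) ^ (m / 2 - 1) =
      (∫ y in (-1 : ℝ)..1, (1 - y ^ 2) ^ (m / 2 - 1)) * artanh T := by
  rw [← integral_inv_one_sub_sq hT, ← intervalIntegral.integral_const_mul]
  refine integral_congr fun u hu => ?_
  have hu' : u ∈ Ioo (-1 : ℝ) 1 := ordConnected_Ioo.uIcc_subset (by norm_num) hT hu
  have hq : 0 < 1 - u ^ 2 := by nlinarith [hu'.1, hu'.2]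
  rw [integral_one_sub_sq_rpow_mul_one_sub_mul_rpow hm hu', mul_right_comm, ← Real.rpow_add hq,
    show -(m / 2) + (m / 2 - 1) = -1 by ring, Real.rpow_neg_one, mul_comm]

theorem integral_integral_eq_integral_sin_pow_mul_artanh {m T : ℝ} (j : ℕ) (hm : m = j + 2)
    (hT : T ∈ Ioo (-1 : ℝ) 1) :
    ∫ u in (0 : ℝ)..T,
        (∫ x in (-1 : ℝ)..1, (1 - x ^ 2) ^ (m / 2 - 1) * (1 - x * u) ^ (-m)) *
          (1 - u ^ 2) ^ (m / 2 - 1) =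
      (∫ x in 0..π, Real.sin x ^ (j + 1)) * artanh T := by
  rw [integral_integral_one_sub_mul_rpow (by rw [hm]; linarith [j.cast_nonneg (α := ℝ)]) hT,
    ← integral_one_sub_sq_rpow_half_eq_integral_sin_pow, hm]
  ring_nf

theorem artanh_sq_sub_one_div_sq_add_one {lam : ℝ} (hlam : lam ≠ 0) :
    artanh ((lam ^ 2 - 1) / (lam ^ 2 + 1)) = Real.log |lam| := by
  have hpos : 0 < lam ^ 2 + 1 := by positivity
  have hquot : (1 + (lam ^ 2 - 1) / (lam ^ 2 + 1)) / (1 - (lam ^ 2 - 1) / (lam ^ 2 + 1)) =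
      lam ^ 2 := by
    field_simp
    ring
  rw [artanh, hquot, Real.log_pow, Real.log_abs]
  push_cast
  ring

theorem isEquivalent_cB (n : ℕ) :
    (fun k => (cB n k : ℝ)) ~[atTop] fun k => (((n : ℝ) + 1) * k) ^ n / n.factorial := by
  have hchoose := (isEquivalent_choose n).comp_tendsto (tendsto_succ_mul_sub_one_atTop n)
  refine (hchoose.trans (((isEquivalent_succ_mul_sub_one n).pow n).div
    IsEquivalent.refl)).congr_left ?_
  filter_upwards [eventually_ge_atTop 1] with k hk
  obtain ⟨k, rfl⟩ : ∃ k', k = k' + 1 := ⟨k - 1, by omega⟩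
  simp only [Function.comp_apply, cB]
  rw [Nat.add_sub_cancel, Nat.mul_succ, ← Nat.add_assoc, Nat.add_sub_cancel]

end BallPaper

theorem isEquivalent_integral_sin_pow_succ_mul_sub_one (n : ℕ) :
    (fun k : ℕ => ∫ x in 0..π, Real.sin x ^ ((n + 1) * k - 1)) ~[atTop]
      fun k => √(2 * π / (((n : ℝ) + 1) * k)) :=
  (isEquivalent_integral_sin_pow.comp_tendsto (tendsto_succ_mul_sub_one_atTop n)).trans <|
    (IsEquivalent.refl.div (isEquivalent_succ_mul_sub_one n)).sqrt fun k => by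
      simp only [Pi.div_apply]
      positivity

theorem succ_mul_pow_div_factorial_mul_sqrt {n : ℕ} {k : ℝ} (hk : 0 < k) :
    (((n : ℝ) + 1) * k) ^ n / n.factorial * ((n.factorial : ℝ) / π ^ n) ^ ((2 : ℝ) / (n + 1)) *
        √(2 * π / ((n + 1) * k)) =
      k ^ ((n : ℝ) - 1 / 2) * √2 * ((n : ℝ) + 1) ^ ((n : ℝ) - 1 / 2) *
        π ^ (-((3 * (n : ℝ) - 1) / (2 * n + 2))) *
        (n.factorial : ℝ) ^ (-(((n : ℝ) - 1) / (n + 1))) := by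
  refine Real.log_injOn_pos (Set.mem_Ioi.2 (by positivity)) (Set.mem_Ioi.2 (by positivity)) ?_
  simp (disch := positivity) only [Real.log_mul, Real.log_div, Real.log_rpow, Real.log_sqrt,
    Real.log_pow]
  field_simp
  ring

open BallPaper Filter Topology in
theorem J2_asymptotics_general (n : ℕ) (T : ℝ) (hT0 : 0 < T) (hT1 : T < 1) :
    Tendsto (fun k : ℕ =>
      ((cB n k : ℝ) * ((Nat.factorial n : ℝ) / Real.pi ^ n) ^ ((2 : ℝ) / ((n : ℝ) + 1)) *
          ∫ u in (0 : ℝ)..T,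
            (∫ x in (-1 : ℝ)..1,
              (1 - x ^ 2) ^ ((((n : ℝ) + 1) * (k : ℝ)) / 2 - 1) *
                (1 - x * u) ^ (-(((n : ℝ) + 1) * (k : ℝ)))) *
            (1 - u ^ 2) ^ ((((n : ℝ) + 1) * (k : ℝ)) / 2 - 1)) /
        ((k : ℝ) ^ ((n : ℝ) - 1 / 2) * Real.sqrt 2 * ((n : ℝ) + 1) ^ ((n : ℝ) - 1 / 2) *
          Real.pi ^ (-((3 * (n : ℝ) - 1) / (2 * (n : ℝ) + 2))) *
          (Nat.factorial n : ℝ) ^ (-(((n : ℝ) - 1) / ((n : ℝ) + 1))) * artanh T))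
      atTop (𝓝 1) ∧
    ∀ lam : ℝ, 1 < lam ^ 2 → T = (lam ^ 2 - 1) / (lam ^ 2 + 1) →
      artanh T = Real.log |lam| := by
  refine ⟨?_, fun lam hlam hT =>
    hT ▸ artanh_sq_sub_one_div_sq_add_one (by rintro rfl; norm_num at hlam)⟩
  have hT : T ∈ Ioo (-1 : ℝ) 1 := ⟨by linarith, hT1⟩
  have hartanh : 0 < artanh T :=
    div_pos (Real.log_pos ((one_lt_div (by linarith)).2 (by linarith))) two_pos
  have hnum := ((isEquivalent_cB n).mul
    (IsEquivalent.refl (u := fun _ => ((n.factorial : ℝ) / π ^ n) ^ ((2 : ℝ) / (n + 1))))).mul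
    ((isEquivalent_integral_sin_pow_succ_mul_sub_one n).mul
      (IsEquivalent.refl (u := fun _ => artanh T)))
  refine (isEquivalent_iff_tendsto_one ?_).mp ((hnum.congr_left ?_).congr_right ?_)
  · filter_upwards [eventually_gt_atTop 0] with k hk
    positivity
  · filter_upwards [eventually_ge_atTop 2] with k hk
    have h2 : 2 ≤ (n + 1) * k := by nlinarith
    have hj : ((n : ℝ) + 1) * k = (((n + 1) * k - 2 : ℕ) : ℝ) + 2 := by
      rw [Nat.cast_sub h2]
      push_cast
      ring
    simp only [Pi.mul_apply]
    have hsucc : (n + 1) * k - 2 + 1 = (n + 1) * k - 1 := by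
      generalize (n + 1) * k = m at h2
      omega
    rw [integral_integral_eq_integral_sin_pow_mul_artanh _ hj hT, hsucc, mul_assoc]
  · filter_upwards [eventually_gt_atTop 0] with k hk
    simp only [Pi.mul_apply]
    rw [← succ_mul_pow_div_factorial_mul_sqrt (by positivity)]
    ring

open BallPaper Filter Topology in
/-- asymptotics of c(𝔹ⁿ,k) (n!/πⁿ)^{2/(n+1)} ∫₀^T [...] du as k → ∞,
together with the fact that artanh((λ²−1)/(λ²+1)) = ln|λ| for λ² > 1. -/
theorem J2_asymptotics (n : ℕ) (hn : 0 < n) (T : ℝ) (hT0 : 0 < T) (hT1 : T < 1) :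
    Tendsto (fun k : ℕ =>
      ((cB n k : ℝ) * ((Nat.factorial n : ℝ) / Real.pi ^ n) ^ ((2 : ℝ) / ((n : ℝ) + 1)) *
          ∫ u in (0 : ℝ)..T,
            (∫ x in (-1 : ℝ)..1,
              (1 - x ^ 2) ^ ((((n : ℝ) + 1) * (k : ℝ)) / 2 - 1) *
                (1 - x * u) ^ (-(((n : ℝ) + 1) * (k : ℝ)))) *
            (1 - u ^ 2) ^ ((((n : ℝ) + 1) * (k : ℝ)) / 2 - 1)) /
        ((k : ℝ) ^ ((n : ℝ) - 1 / 2) * Real.sqrt 2 * ((n : ℝ) + 1) ^ ((n : ℝ) - 1 / 2) *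
          Real.pi ^ (-((3 * (n : ℝ) - 1) / (2 * (n : ℝ) + 2))) *
          (Nat.factorial n : ℝ) ^ (-(((n : ℝ) - 1) / ((n : ℝ) + 1))) * artanh T))
      atTop (𝓝 1) ∧
    ∀ lam : ℝ, 1 < lam ^ 2 → T = (lam ^ 2 - 1) / (lam ^ 2 + 1) →
      artanh T = Real.log |lam| :=
  J2_asymptotics_general n T hT0 hT1
end
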